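/- The presentation (a, b, c | ab, bc, ac⁻¹) of ℤ is not equivalent via composition, inversion, cancellation, and stabilization moves alone to any presentation with fewer than 3 generators, because every relator obtained by these moves (without replacement) from relators of even total exponent sum again has even total exponent sum, whereas a presentation of ℤ with k < 3 generators whose relators all have even total exponent sum would present a group admitting a surjection onto (ℤ/2ℤ)^k with k < 3 while the original quotient (ℤ/2ℤ)³-abelianization invariant has rank 3 over ℤ/2ℤ. -/

import Mathlib

/-- A finite group presentation: `n` generators and a finite list of relators in the
free group on those generators. -/
structure GroupPres where
  n : ℕ
  rels : List (FreeGroup (Fin n))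

/-- A single stable Andrews–Curtis transformation (composition, inversion, cancellation
or stabilization — no replacement). -/
inductive SACStep : GroupPres → GroupPres → Prop
  /-- Replace the relator `rᵢ` with `rᵢ * rⱼ` for some `j ≠ i`. -/
  | composition {n : ℕ} (rels : List (FreeGroup (Fin n))) (i j : Fin rels.length)
      (hij : i ≠ j) :
      SACStep ⟨n, rels⟩ ⟨n, rels.set i (rels.get i * rels.get j)⟩
  /-- Replace the relator `rᵢ` with `rᵢ⁻¹`. -/
  | inversion {n : ℕ} (rels : List (FreeGroup (Fin n))) (i : Fin rels.length) :
      SACStep ⟨n, rels⟩ ⟨n, rels.set i (rels.get i)⁻¹⟩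
  /-- Replace a relator `rᵢ = u·g·g⁻¹·v`, with `g` a generator or its inverse,
  with `u·v`. -/
  | cancellation {n : ℕ} (rels : List (FreeGroup (Fin n))) (i : Fin rels.length)
      (u v g : FreeGroup (Fin n)) (x : Fin n)
      (hg : g = FreeGroup.of x ∨ g = (FreeGroup.of x)⁻¹)
      (hr : rels.get i = u * (g * g⁻¹) * v) :
      SACStep ⟨n, rels⟩ ⟨n, rels.set i (u * v)⟩
  /-- Add a new generator, which is also added as a relator. -/
  | stabilization {n : ℕ} (rels : List (FreeGroup (Fin n))) :
      SACStep ⟨n, rels⟩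
        ⟨n + 1, (rels.map (FreeGroup.map Fin.castSucc)) ++ [FreeGroup.of (Fin.last n)]⟩

/-!
Record each word by its vector of exponent sums, indexed by `ℕ`, and attach to a presentation
on `n` generators the span of the vectors of its relators together with the unit vectors
`e_k`, `k ≥ n`. Composition, inversion and cancellation do not change this span, and
stabilization only moves `e_n` from the second part to the first, so it is an invariant of
the equivalence. For `(a, b, c | ab, bc, ac⁻¹)` the functional `f ↦ f 0 + f 1 + f 2` over
`ZMod 2` vanishes on the span, so `e_2` is not in it; on at most two generators `e_2` is.
-/

open Submodule

section ExponentVector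

variable (R : Type*) [Ring R]

noncomputable def exponentVector {n : ℕ} (w : FreeGroup (Fin n)) : ℕ → R :=
  Multiplicative.toAdd
    (FreeGroup.lift (fun i : Fin n => Multiplicative.ofAdd (Pi.single (i : ℕ) 1)) w)

variable {R} {n : ℕ}

@[simp]
theorem exponentVector_mul (v w : FreeGroup (Fin n)) :
    exponentVector R (v * w) = exponentVector R v + exponentVector R w := by
  simp [exponentVector]

@[simp]
theorem exponentVector_inv (w : FreeGroup (Fin n)) :
    exponentVector R w⁻¹ = -exponentVector R w := by
  simp [exponentVector]

@[simp]
theorem exponentVector_of (i : Fin n) :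
    exponentVector R (FreeGroup.of i) = Pi.single (i : ℕ) 1 := by
  simp [exponentVector]

@[simp]
theorem exponentVector_map_castSucc (w : FreeGroup (Fin n)) :
    exponentVector R (FreeGroup.map Fin.castSucc w) = exponentVector R w := by
  induction w using FreeGroup.induction_on with
  | C1 => simp [exponentVector]
  | of i => simp
  | inv_of i => simp
  | mul v w hv hw => simp_all

end ExponentVector

theorem List.getElem_mem_set_of_ne {α : Type*} {l : List α} {i j : ℕ} (hj : j < l.length)
    (hij : i ≠ j) (a : α) : l[j] ∈ l.set i a := by
  rw [← List.getElem_set_ne hij (by simpa)]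
  exact List.getElem_mem _

theorem span_listSet_eq_span {R M : Type*} [Semiring R] [AddCommMonoid M] [Module R M]
    (L : List M) {i : ℕ} (hi : i < L.length) {a : M} (ha : a ∈ span R {x | x ∈ L})
    (hL : L[i] ∈ span R {x | x ∈ L.set i a}) :
    span R {x | x ∈ L.set i a} = span R {x | x ∈ L} := by
  apply le_antisymm <;> refine span_le.2 fun x hx => ?_
  · rcases List.mem_or_eq_of_mem_set hx with hx | rfl
    · exact subset_span hx
    · exact ha
  · obtain ⟨k, hk, rfl⟩ := List.getElem_of_mem hx
    by_cases hki : i = k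
    · subst hki; exact hL
    · exact subset_span (List.getElem_mem_set_of_ne hk hki a)

section RelatorSpan

variable (R : Type*) [Ring R]

noncomputable def relatorSpan (P : GroupPres) : Submodule R (ℕ → R) :=
  span R {v | v ∈ P.rels.map (exponentVector R)} ⊔
    span R ((fun k => Pi.single k 1) '' Set.Ici P.n)

variable {R}

theorem exponentVector_mem_span {n : ℕ} {rels : List (FreeGroup (Fin n))}
    {w : FreeGroup (Fin n)} (hw : w ∈ rels) :
    exponentVector R w ∈ span R {v | v ∈ rels.map (exponentVector R)} :=
  subset_span (List.mem_map_of_mem hw)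

theorem relatorSpan_set_eq {n : ℕ} (rels : List (FreeGroup (Fin n))) {i : ℕ}
    (hi : i < rels.length) {w : FreeGroup (Fin n)}
    (hw : exponentVector R w ∈ span R {v | v ∈ rels.map (exponentVector R)})
    (hr : exponentVector R rels[i] ∈ span R {v | v ∈ (rels.set i w).map (exponentVector R)}) :
    relatorSpan R ⟨n, rels.set i w⟩ = relatorSpan R ⟨n, rels⟩ := by
  simp only [relatorSpan, List.map_set] at hr ⊢
  rw [span_listSet_eq_span _ (by simpa) hw (by simpa using hr)]

theorem relatorSpan_eq_of_sacStep {P Q : GroupPres} (h : SACStep P Q) :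
    relatorSpan R P = relatorSpan R Q := by
  cases h with
  | composition rels i j hij =>
    refine (relatorSpan_set_eq rels i.2 ?_ ?_).symm
    · rw [exponentVector_mul]
      exact add_mem (exponentVector_mem_span (by simp)) (exponentVector_mem_span (by simp))
    · have hj : rels.get j ∈ rels.set i (rels.get i * rels.get j) :=
        List.getElem_mem_set_of_ne j.2 (Fin.val_ne_of_ne hij) _
      have hdiff := sub_mem (exponentVector_mem_span (R := R) (List.mem_set i.2 _))
        (exponentVector_mem_span (R := R) hj)
      rwa [exponentVector_mul, add_sub_cancel_right] at hdiff
  | inversion rels i =>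
    refine (relatorSpan_set_eq rels i.2 ?_ ?_).symm
    · rw [exponentVector_inv]
      exact neg_mem (exponentVector_mem_span (by simp))
    · have hneg := neg_mem (exponentVector_mem_span (R := R) (List.mem_set i.2 (rels.get i)⁻¹))
      rwa [exponentVector_inv, neg_neg] at hneg
  | cancellation rels i u v g _ _ hr =>
    rw [mul_inv_cancel, mul_one] at hr
    simp only [List.get_eq_getElem] at hr
    rw [← hr, List.set_getElem_self]
  | @stabilization n rels =>
    have hrels : (rels.map (FreeGroup.map Fin.castSucc) ++ [FreeGroup.of (Fin.last n)]).map
        (exponentVector R) = rels.map (exponentVector R) ++ [Pi.single n 1] := by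
      simp [Function.comp_def]
    have hIci : Set.Ici n = insert n (Set.Ici (n + 1)) := by
      ext; simp; omega
    simp only [relatorSpan, hrels, List.mem_append, List.mem_singleton, Set.ofPred_or,
      Set.ofPred_eq_eq_singleton, span_union, hIci, Set.image_insert_eq, span_insert]
    rw [sup_assoc]

theorem relatorSpan_eq_of_eqvGen {P Q : GroupPres} (h : Relation.EqvGen SACStep P Q) :
    relatorSpan R P = relatorSpan R Q := by
  induction h with
  | rel _ _ h => exact relatorSpan_eq_of_sacStep h
  | refl _ => rfl
  | symm _ _ _ ih => exact ih.symm
  | trans _ _ _ _ _ ih₁ ih₂ => exact ih₁.trans ih₂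

theorem single_mem_relatorSpan {P : GroupPres} {k : ℕ} (hk : P.n ≤ k) :
    Pi.single k 1 ∈ relatorSpan R P :=
  mem_sup_right (subset_span ⟨k, hk, rfl⟩)

end RelatorSpan

theorem single_two_not_mem_relatorSpan :
    Pi.single 2 1 ∉ relatorSpan (ZMod 2) ⟨3, [FreeGroup.of 0 * FreeGroup.of 1,
      FreeGroup.of 1 * FreeGroup.of 2, FreeGroup.of 0 * (FreeGroup.of 2)⁻¹]⟩ := by
  let ψ : (ℕ → ZMod 2) →ₗ[ZMod 2] ZMod 2 := .proj 0 + .proj 1 + .proj 2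
  intro h₂
  have hψ : ψ (Pi.single 2 1) = 0 := by
    refine (sup_le (span_le.2 ?_) (span_le.2 ?_) : _ ≤ LinearMap.ker ψ) h₂
    · intro v hv
      simp only [List.map_cons, List.map_nil, List.mem_cons, List.not_mem_nil, or_false,
        Set.mem_ofPred_eq] at hv
      rcases hv with rfl | rfl | rfl <;> simp [ψ] <;> decide
    · rintro _ ⟨k, hk : 3 ≤ k, rfl⟩
      simp [ψ, Pi.single_eq_of_ne (show 0 ≠ k by omega), Pi.single_eq_of_ne (show 1 ≠ k by omega),
        Pi.single_eq_of_ne (show 2 ≠ k by omega)]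
  simp [ψ] at hψ

/-- The presentation (a, b, c | ab, bc, ac⁻¹) of ℤ is not equivalent, via composition,
inversion, cancellation and stabilization moves (and their inverses) alone, to any
presentation with fewer than 3 generators. -/
theorem stmt11 (P : GroupPres)
    (h : Relation.EqvGen SACStep
      ⟨3, [FreeGroup.of 0 * FreeGroup.of 1, FreeGroup.of 1 * FreeGroup.of 2,
           FreeGroup.of 0 * (FreeGroup.of 2)⁻¹]⟩ P) :
    3 ≤ P.n := by
  by_contra! hP
  have h₂ := single_mem_relatorSpan (R := ZMod 2) (k := 2) (by omega : P.n ≤ 2)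
  exact single_two_not_mem_relatorSpan (relatorSpan_eq_of_eqvGen (R := ZMod 2) h ▸ h₂)
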